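/- (Lemma 2(iii): restricted dual strong convexity in the linear case.) Assume f1: ℝ^{dx} → ℝ is μx-strongly convex and Lx-smooth (Lx ≥ μx > 0), f2 = 0, and g1(y) = bᵀy is linear. For y ∈ ℝ^{dy}, let x*(y) denote the unique minimizer over x of f1(x) + ⟨Bᵀy, x⟩, and let σ̃min(B) denote the smallest nonzero singular value of B ≠ 0. Then for all y, y' ∈ ℝ^{dy} with y − y' ∈ Range(B): ⟨B x*(y') − B x*(y), y − y'⟩ ≥ (σ̃min(B)²/Lx)‖y − y'‖² (i.e., the dual function φ(y) = bᵀy + f1*(−Bᵀy) is (σ̃min(B)²/Lx)-strongly convex on Range(B)). -/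

import Mathlib

open scoped RealInnerProductSpace
open Matrix

/-- Action of a matrix on Euclidean space. -/
noncomputable def mulE {m n : ℕ} (B : Matrix (Fin m) (Fin n) ℝ)
    (x : EuclideanSpace ℝ (Fin n)) : EuclideanSpace ℝ (Fin m) :=
  Matrix.toEuclideanLin B x

/-- Largest singular value (operator norm) of a matrix. -/
noncomputable def sigmaMax {m n : ℕ} (B : Matrix (Fin m) (Fin n) ℝ) : ℝ :=
  ‖LinearMap.toContinuousLinearMap (Matrix.toEuclideanLin B)‖

/-- Largest eigenvalue of a symmetric matrix (Rayleigh quotient formulation). -/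
noncomputable def lambdaMax {n : ℕ} (P : Matrix (Fin n) (Fin n) ℝ) : ℝ :=
  ⨆ v : Metric.sphere (0 : EuclideanSpace ℝ (Fin n)) 1,
    ⟪mulE P (v : EuclideanSpace ℝ (Fin n)), (v : EuclideanSpace ℝ (Fin n))⟫

/-- Smallest eigenvalue of a symmetric matrix (Rayleigh quotient formulation). -/
noncomputable def lambdaMin {n : ℕ} (P : Matrix (Fin n) (Fin n) ℝ) : ℝ :=
  ⨅ v : Metric.sphere (0 : EuclideanSpace ℝ (Fin n)) 1,
    ⟪mulE P (v : EuclideanSpace ℝ (Fin n)), (v : EuclideanSpace ℝ (Fin n))⟫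

/-- `f` is `μ`-strongly convex: `f - μ/2 ‖·‖²` is convex. -/
def StrongConvex {n : ℕ} (μ : ℝ) (f : EuclideanSpace ℝ (Fin n) → ℝ) : Prop :=
  ConvexOn ℝ Set.univ fun x => f x - μ / 2 * ‖x‖ ^ 2

/-- A function with values in `ℝ ∪ {+∞}` (modelled by `EReal`) is proper. -/
def ProperER {n : ℕ} (f : EuclideanSpace ℝ (Fin n) → EReal) : Prop :=
  (∀ x, f x ≠ ⊥) ∧ ∃ x, f x ≠ ⊤

/-- Convexity for `EReal`-valued functions. -/
def ConvexER {n : ℕ} (f : EuclideanSpace ℝ (Fin n) → EReal) : Prop :=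
  ∀ x y : EuclideanSpace ℝ (Fin n), ∀ a b : ℝ, 0 ≤ a → 0 ≤ b → a + b = 1 →
    f (a • x + b • y) ≤ (a : EReal) * f x + (b : EReal) * f y

/-- `s` is a subgradient of the `EReal`-valued convex function `f` at `x`. -/
def IsSubgradAt {n : ℕ} (f : EuclideanSpace ℝ (Fin n) → EReal)
    (x s : EuclideanSpace ℝ (Fin n)) : Prop :=
  ∀ z, f x + ((⟪s, z - x⟫ : ℝ) : EReal) ≤ f z

/-- `p` is the proximal point `prox_{t g}(w)`, i.e. it minimizes `g(·) + 1/(2t)‖· - w‖²`. -/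
def IsProx {n : ℕ} (g : EuclideanSpace ℝ (Fin n) → EReal) (t : ℝ)
    (w p : EuclideanSpace ℝ (Fin n)) : Prop :=
  ∀ z, g p + ((1 / (2 * t) * ‖p - w‖ ^ 2 : ℝ) : EReal)
      ≤ g z + ((1 / (2 * t) * ‖z - w‖ ^ 2 : ℝ) : EReal)

/-- Smallest nonzero singular value of a nonzero matrix `B`: the minimum of `‖Bᵀv‖` over
unit vectors `v` in the range of `B`. -/
noncomputable def sigmaMinNZ {m n : ℕ} (B : Matrix (Fin m) (Fin n) ℝ) : ℝ :=
  ⨅ v : {v : EuclideanSpace ℝ (Fin m) //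
      v ∈ LinearMap.range (Matrix.toEuclideanLin B) ∧ ‖v‖ = 1},
    ‖mulE Bᵀ (v : EuclideanSpace ℝ (Fin m))‖

/-!
At a minimiser `∇f1 (x*(y)) = -Bᵀy`, so `∇f1 (x*(y')) - ∇f1 (x*(y)) = Bᵀ(y - y')`.
Cocoercivity of the gradient of a convex `L`-smooth function bounds `‖Bᵀ(y - y')‖²`
by `L ⟪Bᵀ(y - y'), x*(y') - x*(y)⟫ = L ⟪B x*(y') - B x*(y), y - y'⟫`,
and on `Range B` we have `σ̃min(B) ‖y - y'‖ ≤ ‖Bᵀ(y - y')‖`.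
-/

open Set AffineMap

section Gradient

variable {E : Type*} [NormedAddCommGroup E] [InnerProductSpace ℝ E] [CompleteSpace E]
  {f : E → ℝ} {f' : E → E} {g x z : E} {L : ℝ}

theorem HasGradientAt.hasDerivAt_comp_lineMap {t : ℝ} (hf : HasGradientAt f g (lineMap x z t)) :
    HasDerivAt (fun s : ℝ => f (lineMap x z s)) ⟪g, z - x⟫ t := by
  have h := hf.hasFDerivAt.comp_hasDerivAt t hasDerivAt_lineMap
  rw [InnerProductSpace.toDual_apply_apply] at h
  exact h

theorem ConvexOn.add_inner_gradient_le (hf : ConvexOn ℝ univ f) (hg : HasGradientAt f g x)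
    (z : E) : f x + ⟪g, z - x⟫ ≤ f z := by
  have hline : ConvexOn ℝ univ fun t : ℝ => f (lineMap x z t) :=
    hf.comp_affineMap (lineMap x z)
  have := hline.le_slope_of_hasDerivAt (mem_univ 0) (mem_univ 1) zero_lt_one
    (HasGradientAt.hasDerivAt_comp_lineMap (by rwa [lineMap_apply_zero]))
  rw [slope_def_field, lineMap_apply_one, lineMap_apply_zero, sub_zero, div_one] at this
  linarith

theorem le_add_inner_gradient_add_sq (hf : ∀ x, HasGradientAt f (f' x) x)
    (hlip : ∀ a b, ‖f' a - f' b‖ ≤ L * ‖a - b‖) (x z : E) :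
    f z ≤ f x + ⟪f' x, z - x⟫ + L / 2 * ‖z - x‖ ^ 2 := by
  have hderiv (t : ℝ) :
      HasDerivAt (fun s : ℝ => f (lineMap x z s)) ⟪f' (lineMap x z t), z - x⟫ t :=
    (hf _).hasDerivAt_comp_lineMap
  have hbound : ∀ t ∈ Ico (0 : ℝ) 1,
      ⟪f' (lineMap x z t), z - x⟫ ≤ ⟪f' x, z - x⟫ + L * t * ‖z - x‖ ^ 2 := by
    intro t ht
    have hdist : ‖lineMap x z t - x‖ = t * ‖z - x‖ := by
      rw [← dist_eq_norm, dist_lineMap_left, Real.norm_of_nonneg ht.1, dist_eq_norm']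
    calc ⟪f' (lineMap x z t), z - x⟫
        = ⟪f' x, z - x⟫ + ⟪f' (lineMap x z t) - f' x, z - x⟫ := by
          rw [inner_sub_left]; ring
      _ ≤ ⟪f' x, z - x⟫ + ‖f' (lineMap x z t) - f' x‖ * ‖z - x‖ := by
          gcongr; exact real_inner_le_norm _ _
      _ ≤ ⟪f' x, z - x⟫ + L * ‖lineMap x z t - x‖ * ‖z - x‖ := by grw [hlip]
      _ = ⟪f' x, z - x⟫ + L * t * ‖z - x‖ ^ 2 := by rw [hdist]; ring
  have key := image_le_of_deriv_right_le_deriv_boundary (a := 0) (b := 1)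
    (B := fun t => f x + t * ⟪f' x, z - x⟫ + L / 2 * ‖z - x‖ ^ 2 * t ^ 2)
    (fun t _ => (hderiv t).continuousAt.continuousWithinAt)
    (fun t _ => (hderiv t).hasDerivWithinAt) (by simp) (by fun_prop)
    (fun t _ => by
      have := (((hasDerivAt_id t).mul_const ⟪f' x, z - x⟫).const_add (f x)).add
        ((hasDerivAt_pow 2 t).const_mul (L / 2 * ‖z - x‖ ^ 2))
      exact (this.congr_deriv (by norm_num; ring)).hasDerivWithinAt)
    hbound (right_mem_Icc.2 zero_le_one)
  rwa [lineMap_apply_one, one_mul, one_pow, mul_one] at key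

theorem ConvexOn.add_inner_gradient_add_sq_le (hconv : ConvexOn ℝ univ f)
    (hf : ∀ x, HasGradientAt f (f' x) x) (hL : 0 < L)
    (hlip : ∀ a b, ‖f' a - f' b‖ ≤ L * ‖a - b‖) (u v : E) :
    f v + ⟪f' v, u - v⟫ + 1 / (2 * L) * ‖f' u - f' v‖ ^ 2 ≤ f u := by
  set g := f' u - f' v
  -- `w` is the gradient step from `u` for `f - ⟪f' v, ·⟫`, which is minimal at `v`
  set w := u - L⁻¹ • g
  have hlower := hconv.add_inner_gradient_le (hf v) w
  have hupper := le_add_inner_gradient_add_sq hf hlip u w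
  have hwv : w - v = (u - v) - L⁻¹ • g := by simp only [w]; abel
  have hwu : w - u = -(L⁻¹ • g) := by simp only [w]; abel
  have hg : L⁻¹ * ⟪f' u, g⟫ - L⁻¹ * ⟪f' v, g⟫ = L⁻¹ * ‖g‖ ^ 2 := by
    rw [← mul_sub, ← inner_sub_left, real_inner_self_eq_norm_sq]
  rw [hwv, inner_sub_right, real_inner_smul_right] at hlower
  rw [hwu, inner_neg_right, real_inner_smul_right, norm_neg, norm_smul, Real.norm_of_nonneg
    (inv_nonneg.2 hL.le)] at hupper
  have hquad : L / 2 * (L⁻¹ * ‖g‖) ^ 2 = L⁻¹ * ‖g‖ ^ 2 - 1 / (2 * L) * ‖g‖ ^ 2 := by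
    field_simp; ring
  linarith

theorem ConvexOn.sq_norm_gradient_sub_le (hconv : ConvexOn ℝ univ f)
    (hf : ∀ x, HasGradientAt f (f' x) x) (hL : 0 < L)
    (hlip : ∀ a b, ‖f' a - f' b‖ ≤ L * ‖a - b‖) (u v : E) :
    ‖f' u - f' v‖ ^ 2 ≤ L * ⟪f' u - f' v, u - v⟫ := by
  have huv := hconv.add_inner_gradient_add_sq_le hf hL hlip u v
  have hvu := hconv.add_inner_gradient_add_sq_le hf hL hlip v u
  rw [norm_sub_rev] at hvu
  have hinner : ⟪f' u - f' v, u - v⟫ = -⟪f' v, u - v⟫ - ⟪f' u, v - u⟫ := by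
    rw [inner_sub_left, ← neg_sub u v, inner_neg_right]; ring
  rw [hinner, ← div_le_iff₀' hL]
  have hsplit : ‖f' u - f' v‖ ^ 2 / L = 1 / (2 * L) * ‖f' u - f' v‖ ^ 2 * 2 := by
    field_simp
  linarith

theorem HasGradientAt.eq_neg_of_isMinOn_add_inner {c : E} (hg : HasGradientAt f g x)
    (hmin : IsMinOn (fun z => f z + ⟪c, z⟫) univ x) : g = -c := by
  have hderiv : HasFDerivAt (fun z => f z + ⟪c, z⟫)
      (InnerProductSpace.toDual ℝ E (g + c)) x := by
    rw [map_add]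
    exact hg.hasFDerivAt.add (InnerProductSpace.toDual ℝ E c).hasFDerivAt
  have hzero := (hmin.isLocalMin Filter.univ_mem).hasFDerivAt_eq_zero hderiv
  rw [LinearIsometryEquiv.map_eq_zero_iff] at hzero
  exact eq_neg_of_add_eq_zero_left hzero

end Gradient

theorem StrongConvex.convexOn {n : ℕ} {μ : ℝ} {f : EuclideanSpace ℝ (Fin n) → ℝ}
    (hf : StrongConvex μ f) (hμ : 0 ≤ μ) : ConvexOn ℝ univ f :=
  strongConvexOn_zero.1 ((strongConvexOn_iff_convex.2 hf).mono hμ)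

section Matrix

variable {m n : ℕ} (B : Matrix (Fin m) (Fin n) ℝ)

theorem mulE_sub (x x' : EuclideanSpace ℝ (Fin n)) : mulE B (x - x') = mulE B x - mulE B x' :=
  map_sub (Matrix.toEuclideanLin B) x x'

theorem inner_mulE_transpose (w : EuclideanSpace ℝ (Fin m)) (x : EuclideanSpace ℝ (Fin n)) :
    ⟪mulE Bᵀ w, x⟫ = ⟪w, mulE B x⟫ := by
  rw [mulE, mulE, ← Matrix.conjTranspose_eq_transpose_of_trivial,
    Matrix.toEuclideanLin_conjTranspose_eq_adjoint, LinearMap.adjoint_inner_left]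

theorem sigmaMinNZ_nonneg : 0 ≤ sigmaMinNZ B :=
  Real.iInf_nonneg fun _ => norm_nonneg _

theorem sigmaMinNZ_le {u : EuclideanSpace ℝ (Fin m)}
    (hu : u ∈ LinearMap.range (Matrix.toEuclideanLin B)) (hu1 : ‖u‖ = 1) :
    sigmaMinNZ B ≤ ‖mulE Bᵀ u‖ :=
  ciInf_le (f := fun u : {u // u ∈ LinearMap.range (Matrix.toEuclideanLin B) ∧ ‖u‖ = 1} =>
      ‖mulE Bᵀ (u : EuclideanSpace ℝ (Fin m))‖)
    ⟨0, by rintro _ ⟨_, rfl⟩; exact norm_nonneg _⟩ ⟨u, hu, hu1⟩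

theorem sigmaMinNZ_mul_norm_le {v : EuclideanSpace ℝ (Fin m)}
    (hv : v ∈ LinearMap.range (Matrix.toEuclideanLin B)) :
    sigmaMinNZ B * ‖v‖ ≤ ‖mulE Bᵀ v‖ := by
  rcases eq_or_ne v 0 with rfl | hv0
  · simp
  have hle := sigmaMinNZ_le B (Submodule.smul_mem _ ‖v‖⁻¹ hv) (norm_smul_inv_norm hv0)
  rwa [mulE, map_smul, norm_smul, norm_inv, norm_norm, ← div_eq_inv_mul,
    le_div_iff₀ (norm_pos_iff.2 hv0)] at hle

end Matrix

theorem dual_restricted_strongly_monotone_linear_case_general {dx dy : ℕ} (μx Lx : ℝ)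
    (hμx : 0 < μx) (hLx : μx ≤ Lx)
    (f1 : EuclideanSpace ℝ (Fin dx) → ℝ)
    (f1' : EuclideanSpace ℝ (Fin dx) → EuclideanSpace ℝ (Fin dx))
    (hf1grad : ∀ x, HasGradientAt f1 (f1' x) x)
    (hf1sc : StrongConvex μx f1)
    (hf1sm : ∀ x x', ‖f1' x - f1' x'‖ ≤ Lx * ‖x - x'‖)
    (B : Matrix (Fin dy) (Fin dx) ℝ)
    (xstar : EuclideanSpace ℝ (Fin dy) → EuclideanSpace ℝ (Fin dx))
    (hxstar : ∀ y x, f1 (xstar y) + ⟪mulE Bᵀ y, xstar y⟫ ≤ f1 x + ⟪mulE Bᵀ y, x⟫) :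
    ∀ y y' : EuclideanSpace ℝ (Fin dy),
      y - y' ∈ LinearMap.range (Matrix.toEuclideanLin B) →
      (sigmaMinNZ B ^ 2 / Lx) * ‖y - y'‖ ^ 2 ≤
        ⟪mulE B (xstar y') - mulE B (xstar y), y - y'⟫ := by
  intro y y' hrange
  have hL : 0 < Lx := hμx.trans_le hLx
  have hstat (w : EuclideanSpace ℝ (Fin dy)) : f1' (xstar w) = -mulE Bᵀ w :=
    (hf1grad _).eq_neg_of_isMinOn_add_inner (isMinOn_univ_iff.2 (hxstar w))
  have hdiff : f1' (xstar y') - f1' (xstar y) = mulE Bᵀ (y - y') := by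
    rw [hstat, hstat, mulE_sub]; abel
  have hco := (hf1sc.convexOn hμx.le).sq_norm_gradient_sub_le hf1grad hL hf1sm
    (xstar y') (xstar y)
  rw [hdiff, inner_mulE_transpose, mulE_sub B, real_inner_comm] at hco
  calc sigmaMinNZ B ^ 2 / Lx * ‖y - y'‖ ^ 2 = (sigmaMinNZ B * ‖y - y'‖) ^ 2 / Lx := by ring
    _ ≤ ‖mulE Bᵀ (y - y')‖ ^ 2 / Lx := by
        have := sigmaMinNZ_nonneg B
        gcongr
        exact sigmaMinNZ_mul_norm_le B hrange
    _ ≤ ⟪mulE B (xstar y') - mulE B (xstar y), y - y'⟫ := by rwa [div_le_iff₀' hL]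

/-- Lemma 2(iii): restricted dual strong convexity in the linear case. -/
theorem dual_restricted_strongly_monotone_linear_case {dx dy : ℕ} (μx Lx : ℝ)
    (hμx : 0 < μx) (hLx : μx ≤ Lx)
    (f1 : EuclideanSpace ℝ (Fin dx) → ℝ)
    (f1' : EuclideanSpace ℝ (Fin dx) → EuclideanSpace ℝ (Fin dx))
    (hf1grad : ∀ x, HasGradientAt f1 (f1' x) x)
    (hf1sc : StrongConvex μx f1)
    (hf1sm : ∀ x x', ‖f1' x - f1' x'‖ ≤ Lx * ‖x - x'‖)
    (b : EuclideanSpace ℝ (Fin dy))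
    (B : Matrix (Fin dy) (Fin dx) ℝ) (hB : B ≠ 0)
    (xstar : EuclideanSpace ℝ (Fin dy) → EuclideanSpace ℝ (Fin dx))
    (hxstar : ∀ y x, f1 (xstar y) + ⟪mulE Bᵀ y, xstar y⟫ ≤ f1 x + ⟪mulE Bᵀ y, x⟫) :
    ∀ y y' : EuclideanSpace ℝ (Fin dy),
      y - y' ∈ LinearMap.range (Matrix.toEuclideanLin B) →
      (sigmaMinNZ B ^ 2 / Lx) * ‖y - y'‖ ^ 2 ≤
        ⟪mulE B (xstar y') - mulE B (xstar y), y - y'⟫ :=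
  dual_restricted_strongly_monotone_linear_case_general μx Lx hμx hLx f1 f1' hf1grad hf1sc hf1sm B
    xstar hxstar
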